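/- Let X be a complex Banach space with dim X ≥ 3 and let M, N ∈ N₁(X) be linearly independent. Then the following are equivalent: (1) M ~ N, i.e., range(M) = range(N) or ker(M) = ker(N); (2) there exists B ∈ N₁(X) that is not a scalar multiple of M and not a scalar multiple of N, such that for every T ∈ B(X): if MTM ∉ N₁(X) and NTN ∉ N₁(X), then BTB ∉ N₁(X). -/

import Mathlib

/-!
For a rank-one nilpotent `A`, the operator `A T A` is a multiple of `A` whose square vanishes, so
it is rank-one nilpotent exactly when it is nonzero; the condition on `T` thus reads
`M T M = N T N = 0`.

If `M ~ N`, then `M T M = N T N = 0` forces the cross terms `M T N` and `N T M` to vanish as well,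
so `B = M + N` works. Conversely, test the condition on `T = ψ ⊗ x` with `x ∈ ker N` and `ψ` a
functional vanishing on `range M` but not on `range B` (Hahn–Banach): this shows that
`range B ⊄ range M` forces `ker N ⊆ ker B`, and symmetrically with `M` and `N` exchanged. As ranges
are lines and kernels are hyperplanes, `M ≁ N` would then make `B` share its range and its kernel
with `M` or with `N`, i.e. make `B` a multiple of `M` or of `N`.
-/

/-- A bounded operator is a rank-one nilpotent if its range is one-dimensional
and its square is zero. -/
def IsRankOneNilpotent {X : Type*} [NormedAddCommGroup X] [NormedSpace ℂ X]
    (N : X →L[ℂ] X) : Prop :=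
  Module.rank ℂ (LinearMap.range (N : X →ₗ[ℂ] X)) = 1 ∧ N ^ 2 = 0

universe v

namespace LinearMap

theorem rank_range_le_of_ker_le {R : Type*} {M M₁ M₂ : Type v} [Ring R] [AddCommGroup M]
    [Module R M] [AddCommGroup M₁] [Module R M₁] [AddCommGroup M₂] [Module R M₂]
    {f : M →ₗ[R] M₁} {g : M →ₗ[R] M₂} (h : ker f ≤ ker g) :
    Module.rank R (range g) ≤ Module.rank R (range f) := by
  rw [← g.quotKerEquivRange.rank_eq, ← f.quotKerEquivRange.rank_eq]
  exact (Submodule.factor h).rank_le_of_surjective (Submodule.factor_surjective h)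

section DivisionRing

variable {K V W : Type*} [DivisionRing K] [AddCommGroup V] [Module K V] [AddCommGroup W]
  [Module K W] {f : V →ₗ[K] W}

theorem isAtom_range_of_rank_eq_one (hf : Module.rank K (range f) = 1) : IsAtom (range f) :=
  isSimpleModule_iff_isAtom.1 <| isSimpleModule_iff_finrank_eq_one.2 <|
    Module.rank_eq_one_iff_finrank_eq_one.1 hf

theorem isCoatom_ker_of_rank_range_eq_one (hf : Module.rank K (range f) = 1) :
    IsCoatom (ker f) :=
  isSimpleModule_iff_isCoatom.1 <| f.quotKerEquivRange.isSimpleModule_iff.2 <|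
    isSimpleModule_iff_finrank_eq_one.2 <| Module.rank_eq_one_iff_finrank_eq_one.1 hf

end DivisionRing

theorem exists_eq_smul_of_range_le_of_ker_le {K V W : Type*} [Field K] [AddCommGroup V]
    [Module K V] [AddCommGroup W] [Module K W] {f g : V →ₗ[K] W}
    (hf : Module.rank K (range f) = 1) (hr : range g ≤ range f) (hk : ker f ≤ ker g) :
    ∃ c : K, g = c • f := by
  obtain ⟨x₀, hx₀⟩ : ∃ x₀, f x₀ ≠ 0 := by
    by_contra! h
    exact (isAtom_range_of_rank_eq_one hf).ne_bot (range_eq_bot.2 (LinearMap.ext h))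
  have hspan : range f = K ∙ f x₀ := eq_span_singleton_of_mem_of_finrank_eq_one
    (Module.rank_eq_one_iff_finrank_eq_one.1 hf) (mem_range_self f x₀) hx₀
  obtain ⟨c, hc⟩ := Submodule.mem_span_singleton.1 (hspan ▸ hr (mem_range_self g x₀))
  refine ⟨c, LinearMap.ext fun x => ?_⟩
  obtain ⟨a, ha⟩ := Submodule.mem_span_singleton.1 (hspan ▸ mem_range_self f x)
  have hker : x - a • x₀ ∈ ker g := hk (by simp [ha])
  calc g x = a • g x₀ := by simpa [sub_eq_zero] using hker
    _ = c • f x := by rw [← hc, ← ha, smul_comm]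

end LinearMap

section Pair

variable {R V : Type*} [Ring R] [Nontrivial R] [AddCommGroup V] [Module R V] {x y : V}

theorem LinearIndependent.pair_add_ne_smul_left (h : LinearIndependent R ![x, y]) (c : R) :
    x + y ≠ c • x := fun hc =>
  one_ne_zero (LinearIndependent.pair_iff.1 h (1 - c) 1
    (by rw [sub_smul, one_smul, one_smul, ← hc]; abel)).2

theorem LinearIndependent.pair_add_ne_smul_right (h : LinearIndependent R ![x, y]) (c : R) :
    x + y ≠ c • y := fun hc =>
  one_ne_zero (LinearIndependent.pair_iff.1 h 1 (1 - c)
    (by rw [sub_smul, one_smul, one_smul, ← hc]; abel)).1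

end Pair

section CrossTerms

variable {R V : Type*} [Semiring R] [AddCommMonoid V] [Module R V] [TopologicalSpace V]
  {M N T : V →L[R] V}

theorem mul_mul_eq_zero_of_range_le
    (h : LinearMap.range (N : V →ₗ[R] V) ≤ LinearMap.range (M : V →ₗ[R] V))
    (hM : M * T * M = 0) : M * T * N = 0 := by
  ext x
  obtain ⟨y, hy⟩ := h (LinearMap.mem_range_self _ x)
  have hMy := congr($hM y)
  simp only [mul_apply_eq_comp, zero_apply] at hMy ⊢
  rwa [← ContinuousLinearMap.coe_coe N, ← hy]

theorem mul_mul_eq_zero_of_ker_le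
    (h : LinearMap.ker (N : V →ₗ[R] V) ≤ LinearMap.ker (M : V →ₗ[R] V))
    (hN : N * T * N = 0) : M * T * N = 0 := by
  ext x
  exact h congr($hN x)

theorem add_mul_mul_add_eq_zero [ContinuousAdd V]
    (h : LinearMap.range (M : V →ₗ[R] V) = LinearMap.range (N : V →ₗ[R] V) ∨
      LinearMap.ker (M : V →ₗ[R] V) = LinearMap.ker (N : V →ₗ[R] V))
    (hM : M * T * M = 0) (hN : N * T * N = 0) : (M + N) * T * (M + N) = 0 := by
  have hMN : M * T * N = 0 := h.elim (fun h => mul_mul_eq_zero_of_range_le h.ge hM)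
    (fun h => mul_mul_eq_zero_of_ker_le h.ge hN)
  have hNM : N * T * M = 0 := h.elim (fun h => mul_mul_eq_zero_of_range_le h.le hN)
    (fun h => mul_mul_eq_zero_of_ker_le h.le hM)
  simp only [add_mul, mul_add, hM, hN, hMN, hNM, add_zero]

end CrossTerms

section Normed

variable {𝕜 E : Type*} [RCLike 𝕜] [NormedAddCommGroup E] [NormedSpace 𝕜 E]

theorem Submodule.exists_strongDual_le_ker_of_notMem {S : Submodule 𝕜 E}
    (hS : IsClosed (S : Set E)) {x : E} (hx : x ∉ S) :
    ∃ ψ : StrongDual 𝕜 E, S ≤ LinearMap.ker (ψ : E →ₗ[𝕜] 𝕜) ∧ ψ x ≠ 0 := by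
  have : IsClosed (S : Set E) := hS
  obtain ⟨ψ, hψ⟩ := SeparatingDual.exists_ne_zero (R := 𝕜) (x := S.mkQ x) (by simpa using hx)
  exact ⟨ψ.comp S.mkQL, fun s hs => by simp [(Submodule.Quotient.mk_eq_zero S).2 hs], hψ⟩

theorem ker_le_ker_of_forall_mul_mul_eq_zero {M N B : E →L[𝕜] E}
    (hM : IsClosed (LinearMap.range (M : E →ₗ[𝕜] E) : Set E))
    (hP : ∀ T, M * T * M = 0 → N * T * N = 0 → B * T * B = 0)
    (hB : ¬ LinearMap.range (B : E →ₗ[𝕜] E) ≤ LinearMap.range (M : E →ₗ[𝕜] E)) :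
    LinearMap.ker (N : E →ₗ[𝕜] E) ≤ LinearMap.ker (B : E →ₗ[𝕜] E) := by
  obtain ⟨_, ⟨y, rfl⟩, hy⟩ := SetLike.not_le_iff_exists.1 hB
  obtain ⟨ψ, hψM, hψ⟩ := Submodule.exists_strongDual_le_ker_of_notMem hM hy
  intro x hx
  have hψM' : ∀ z, ψ (M z) = 0 := fun z => hψM (LinearMap.mem_range_self _ z)
  have hx' : N x = 0 := hx
  have hBTB := congr($(hP (ψ.smulRight x)
    (by ext z; simp only [mul_apply_eq_comp, ContinuousLinearMap.smulRight_apply, hψM',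
      zero_smul, map_zero, zero_apply])
    (by ext z; simp only [mul_apply_eq_comp, ContinuousLinearMap.smulRight_apply, map_smul, hx',
      smul_zero, zero_apply])) y)
  simp only [mul_apply_eq_comp, ContinuousLinearMap.smulRight_apply, map_smul, zero_apply,
    smul_eq_zero] at hBTB
  exact hBTB.resolve_left hψ

theorem range_eq_or_ker_eq_of_forall_mul_mul_eq_zero {M N B : E →L[𝕜] E}
    (hM : Module.rank 𝕜 (LinearMap.range (M : E →ₗ[𝕜] E)) = 1)
    (hN : Module.rank 𝕜 (LinearMap.range (N : E →ₗ[𝕜] E)) = 1)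
    (hB : Module.rank 𝕜 (LinearMap.range (B : E →ₗ[𝕜] E)) = 1)
    (hBM : ∀ c : 𝕜, B ≠ c • M) (hBN : ∀ c : 𝕜, B ≠ c • N)
    (hP : ∀ T, M * T * M = 0 → N * T * N = 0 → B * T * B = 0) :
    LinearMap.range (M : E →ₗ[𝕜] E) = LinearMap.range (N : E →ₗ[𝕜] E) ∨
      LinearMap.ker (M : E →ₗ[𝕜] E) = LinearMap.ker (N : E →ₗ[𝕜] E) := by
  have isClosed_range {A : E →L[𝕜] E}
      (hA : Module.rank 𝕜 (LinearMap.range (A : E →ₗ[𝕜] E)) = 1) :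
      IsClosed (LinearMap.range (A : E →ₗ[𝕜] E) : Set E) :=
    have := FiniteDimensional.of_rank_eq_one hA
    Submodule.closed_of_finiteDimensional _
  have hP' : ∀ T, N * T * N = 0 → M * T * M = 0 → B * T * B = 0 := fun T hN hM => hP T hM hN
  have hB_ne_bot := (LinearMap.isAtom_range_of_rank_eq_one hB).ne_bot
  have hB_ne_top := (LinearMap.isCoatom_ker_of_rank_range_eq_one hB).ne_top
  by_contra! ⟨hrange, hker⟩
  by_cases hBM_range : LinearMap.range (B : E →ₗ[𝕜] E) ≤ LinearMap.range (M : E →ₗ[𝕜] E)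
  · have hBN_range : ¬ LinearMap.range (B : E →ₗ[𝕜] E) ≤ LinearMap.range (N : E →ₗ[𝕜] E) :=
      fun h => hrange <|
        (((LinearMap.isAtom_range_of_rank_eq_one hM).le_iff_eq hB_ne_bot).1 hBM_range).symm.trans
          (((LinearMap.isAtom_range_of_rank_eq_one hN).le_iff_eq hB_ne_bot).1 h)
    obtain ⟨c, hc⟩ := LinearMap.exists_eq_smul_of_range_le_of_ker_le hM hBM_range
      (ker_le_ker_of_forall_mul_mul_eq_zero (isClosed_range hN) hP' hBN_range)
    exact hBM c (ContinuousLinearMap.coe_injective hc)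
  have hNB := ker_le_ker_of_forall_mul_mul_eq_zero (isClosed_range hM) hP hBM_range
  by_cases hBN_range : LinearMap.range (B : E →ₗ[𝕜] E) ≤ LinearMap.range (N : E →ₗ[𝕜] E)
  · obtain ⟨c, hc⟩ := LinearMap.exists_eq_smul_of_range_le_of_ker_le hN hBN_range hNB
    exact hBN c (ContinuousLinearMap.coe_injective hc)
  have hMB := ker_le_ker_of_forall_mul_mul_eq_zero (isClosed_range hN) hP' hBN_range
  exact hker <|
    (((LinearMap.isCoatom_ker_of_rank_range_eq_one hM).le_iff_eq hB_ne_top).1 hMB).symm.trans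
      (((LinearMap.isCoatom_ker_of_rank_range_eq_one hN).le_iff_eq hB_ne_top).1 hNB)

end Normed

section RankOneNilpotent

variable {X : Type*} [NormedAddCommGroup X] [NormedSpace ℂ X] {A S T : X →L[ℂ] X}

theorem not_isRankOneNilpotent_zero : ¬ IsRankOneNilpotent (0 : X →L[ℂ] X) := by
  simp [IsRankOneNilpotent]

theorem isRankOneNilpotent_iff_ne_zero (hS : S ^ 2 = 0)
    (hrank : Module.rank ℂ (LinearMap.range (S : X →ₗ[ℂ] X)) ≤ 1) :
    IsRankOneNilpotent S ↔ S ≠ 0 := by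
  refine ⟨fun h hS0 => not_isRankOneNilpotent_zero (hS0 ▸ h),
    fun hS0 => ⟨le_antisymm hrank ?_, hS⟩⟩
  rw [Cardinal.one_le_iff_ne_zero, Ne, Submodule.rank_eq_zero, LinearMap.range_eq_bot]
  exact fun h => hS0 (ContinuousLinearMap.coe_injective h)

theorem IsRankOneNilpotent.isRankOneNilpotent_mul_mul_iff (hA : IsRankOneNilpotent A) :
    IsRankOneNilpotent (A * T * A) ↔ A * T * A ≠ 0 := by
  refine isRankOneNilpotent_iff_ne_zero ?_ (hA.1 ▸ Submodule.rank_mono ?_)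
  · calc (A * T * A) ^ 2 = A * T * A ^ 2 * T * A := by noncomm_ring
      _ = 0 := by rw [hA.2]; simp
  · rw [mul_assoc]
    exact LinearMap.range_comp_le_range ((T * A : X →L[ℂ] X) : X →ₗ[ℂ] X) _

theorem IsRankOneNilpotent.add {M N : X →L[ℂ] X} (hM : IsRankOneNilpotent M)
    (hN : IsRankOneNilpotent N)
    (h : LinearMap.range (M : X →ₗ[ℂ] X) = LinearMap.range (N : X →ₗ[ℂ] X) ∨
      LinearMap.ker (M : X →ₗ[ℂ] X) = LinearMap.ker (N : X →ₗ[ℂ] X))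
    (hMN : M + N ≠ 0) : IsRankOneNilpotent (M + N) := by
  refine (isRankOneNilpotent_iff_ne_zero ?_ ?_).2 hMN
  · simpa [sq] using add_mul_mul_add_eq_zero (T := 1) h (by simpa [sq] using hM.2)
      (by simpa [sq] using hN.2)
  · rw [← hM.1]
    rcases h with h | h
    · refine Submodule.rank_mono ((LinearMap.range_add_le _ _).trans ?_)
      rw [h, sup_idem]
    · refine LinearMap.rank_range_le_of_ker_le fun x hx => ?_
      have hNx : x ∈ LinearMap.ker (N : X →ₗ[ℂ] X) := h ▸ hx
      rw [LinearMap.mem_ker, ContinuousLinearMap.coe_coe] at hx hNx ⊢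
      rw [add_apply, hx, hNx, add_zero]

end RankOneNilpotent

theorem sim_iff_exists_B_general {X : Type*}
    [NormedAddCommGroup X] [NormedSpace ℂ X] (M N : X →L[ℂ] X)
    (hM : IsRankOneNilpotent M) (hN : IsRankOneNilpotent N)
    (hind : LinearIndependent ℂ ![M, N]) :
    (LinearMap.range (M : X →ₗ[ℂ] X) = LinearMap.range (N : X →ₗ[ℂ] X) ∨
      LinearMap.ker (M : X →ₗ[ℂ] X) = LinearMap.ker (N : X →ₗ[ℂ] X)) ↔
      (∃ B : X →L[ℂ] X, IsRankOneNilpotent B ∧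
        (∀ c : ℂ, B ≠ c • M) ∧ (∀ c : ℂ, B ≠ c • N) ∧
        (∀ T : X →L[ℂ] X,
          (¬ IsRankOneNilpotent (M * T * M) ∧ ¬ IsRankOneNilpotent (N * T * N)) →
            ¬ IsRankOneNilpotent (B * T * B))) := by
  constructor
  · intro hsim
    have hB := hM.add hN hsim (by simpa using hind.pair_add_ne_smul_left 0)
    refine ⟨M + N, hB, hind.pair_add_ne_smul_left, hind.pair_add_ne_smul_right, ?_⟩
    rintro T ⟨hMT, hNT⟩
    rw [hM.isRankOneNilpotent_mul_mul_iff, not_not] at hMT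
    rw [hN.isRankOneNilpotent_mul_mul_iff, not_not] at hNT
    rw [hB.isRankOneNilpotent_mul_mul_iff, not_not]
    exact add_mul_mul_add_eq_zero hsim hMT hNT
  · rintro ⟨B, hB, hBM, hBN, hP⟩
    refine range_eq_or_ker_eq_of_forall_mul_mul_eq_zero hM.1 hN.1 hB.1 hBM hBN fun T hMT hNT => ?_
    have hBT := hP T ⟨hMT ▸ not_isRankOneNilpotent_zero, hNT ▸ not_isRankOneNilpotent_zero⟩
    rwa [hB.isRankOneNilpotent_mul_mul_iff, not_not] at hBT

theorem sim_iff_exists_B {X : Type*}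
    [NormedAddCommGroup X] [NormedSpace ℂ X] [CompleteSpace X]
    (hdim : 3 ≤ Module.rank ℂ X) (M N : X →L[ℂ] X)
    (hM : IsRankOneNilpotent M) (hN : IsRankOneNilpotent N)
    (hind : LinearIndependent ℂ ![M, N]) :
    (LinearMap.range (M : X →ₗ[ℂ] X) = LinearMap.range (N : X →ₗ[ℂ] X) ∨
      LinearMap.ker (M : X →ₗ[ℂ] X) = LinearMap.ker (N : X →ₗ[ℂ] X)) ↔
      (∃ B : X →L[ℂ] X, IsRankOneNilpotent B ∧
        (∀ c : ℂ, B ≠ c • M) ∧ (∀ c : ℂ, B ≠ c • N) ∧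
        (∀ T : X →L[ℂ] X,
          (¬ IsRankOneNilpotent (M * T * M) ∧ ¬ IsRankOneNilpotent (N * T * N)) →
            ¬ IsRankOneNilpotent (B * T * B))) :=
  sim_iff_exists_B_general M N hM hN hind
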